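/- Let H = (X,E) be a k-uniform hypergraph with Δ₂(H) ≤ p and G = L(H). If K₁ and K₂ are distinct maximal cliques of G, each of size at least p·k² + (p−2)·k + 2, then |K₁ ∩ K₂| ≤ p. -/
import Mathlib

/-- A big clique in the line graph has a common vertex. -/
lemma big_clique_common_vertex {X : Type*} [DecidableEq X] (k p : ℕ)
    (hk : 2 ≤ k) (hp : 1 ≤ p)
    (H : Finset (Finset X)) (huniform : ∀ e ∈ H, e.card = k)
    (hpair : ∀ x y : X, x ≠ y → (H.filter (fun e => x ∈ e ∧ y ∈ e)).card ≤ p)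
    (K : Finset (Finset X)) (hKH : K ⊆ H)
    (hclique : ∀ e ∈ K, ∀ f ∈ K, e ≠ f → (e ∩ f).Nonempty)
    (hcard : (p : ℤ) * k ^ 2 + ((p : ℤ) - 2) * k + 2 ≤ (K.card : ℤ)) :
    ∃ x : X, ∀ e ∈ K, x ∈ e := by
  have hK1 : (1 : ℤ) ≤ (K.card : ℤ) := by
    have hpz : (1 : ℤ) ≤ (p : ℤ) := by exact_mod_cast hp
    have hkz : (2 : ℤ) ≤ (k : ℤ) := by exact_mod_cast hk
    nlinarith [sq_nonneg ((k : ℤ) - 1)]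
  have hKne : K.Nonempty := by
    rw [← Finset.card_pos]
    exact_mod_cast lt_of_lt_of_le zero_lt_one hK1
  obtain ⟨e₀, he₀⟩ := hKne
  by_contra hno
  push_neg at hno
  -- for each x, an edge of K missing x
  choose f hfK hfx using hno
  -- bound on the star at x
  have hstar : ∀ x ∈ e₀, (K.filter (fun g => x ∈ g)).card ≤ p * k := by
    intro x hx
    have hsub : K.filter (fun g => x ∈ g) ⊆
        (f x).biUnion (fun y => H.filter (fun g => x ∈ g ∧ y ∈ g)) := by
      intro g hg
      simp only [Finset.mem_filter] at hg
      obtain ⟨hgK, hgx⟩ := hg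
      have hgf : g ≠ f x := by
        intro h; exact hfx x (h ▸ hgx)
      obtain ⟨y, hy⟩ := hclique g hgK (f x) (hfK x) hgf
      simp only [Finset.mem_inter] at hy
      simp only [Finset.mem_biUnion, Finset.mem_filter]
      exact ⟨y, hy.2, hKH hgK, hgx, hy.1⟩
    calc (K.filter (fun g => x ∈ g)).card
        ≤ ((f x).biUnion (fun y => H.filter (fun g => x ∈ g ∧ y ∈ g))).card :=
          Finset.card_le_card hsub
      _ ≤ ∑ y ∈ f x, (H.filter (fun g => x ∈ g ∧ y ∈ g)).card :=
          Finset.card_biUnion_le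
      _ ≤ ∑ _y ∈ f x, p := by
          apply Finset.sum_le_sum
          intro y hy
          apply hpair
          intro h
          exact hfx x (h ▸ hy)
      _ = (f x).card * p := by rw [Finset.sum_const, smul_eq_mul]
      _ = p * k := by rw [huniform _ (hKH (hfK x)), Nat.mul_comm]
  -- K minus e₀ is covered by the punctured stars
  have hcover : K.erase e₀ ⊆
      e₀.biUnion (fun x => (K.filter (fun g => x ∈ g)).erase e₀) := by
    intro g hg
    simp only [Finset.mem_erase] at hg
    obtain ⟨hgne, hgK⟩ := hg
    obtain ⟨x, hx⟩ := hclique g hgK e₀ he₀ hgne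
    simp only [Finset.mem_inter] at hx
    simp only [Finset.mem_biUnion, Finset.mem_erase, Finset.mem_filter]
    exact ⟨x, hx.2, hgne, hgK, hx.1⟩
  have hpk1 : 1 ≤ p * k := Nat.one_le_iff_ne_zero.mpr
    (Nat.mul_ne_zero (by omega) (by omega))
  have hbound : K.card ≤ k * (p * k - 1) + 1 := by
    have h1 : (K.erase e₀).card ≤ ∑ x ∈ e₀, ((K.filter (fun g => x ∈ g)).erase e₀).card :=
      le_trans (Finset.card_le_card hcover) Finset.card_biUnion_le
    have h2 : ∀ x ∈ e₀, ((K.filter (fun g => x ∈ g)).erase e₀).card ≤ p * k - 1 := by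
      intro x hx
      have he₀mem : e₀ ∈ K.filter (fun g => x ∈ g) := Finset.mem_filter.mpr ⟨he₀, hx⟩
      rw [Finset.card_erase_of_mem he₀mem]
      exact Nat.sub_le_sub_right (hstar x hx) 1
    have h3 : (K.erase e₀).card ≤ k * (p * k - 1) := by
      calc (K.erase e₀).card ≤ ∑ x ∈ e₀, ((K.filter (fun g => x ∈ g)).erase e₀).card := h1
        _ ≤ ∑ _x ∈ e₀, (p * k - 1) := Finset.sum_le_sum h2
        _ = e₀.card * (p * k - 1) := by rw [Finset.sum_const, smul_eq_mul]
        _ = k * (p * k - 1) := by rw [huniform _ (hKH he₀)]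
    have := Finset.card_erase_add_one he₀
    omega
  -- contradiction with the size hypothesis
  have hbz : (K.card : ℤ) ≤ (k : ℤ) * ((p : ℤ) * k - 1) + 1 := by
    have : ((p * k - 1 : ℕ) : ℤ) = (p : ℤ) * k - 1 := by
      push_cast [Nat.cast_sub hpk1]; ring
    calc (K.card : ℤ) ≤ ((k * (p * k - 1) + 1 : ℕ) : ℤ) := by exact_mod_cast hbound
      _ = (k : ℤ) * ((p : ℤ) * k - 1) + 1 := by push_cast [Nat.cast_sub hpk1]; ring
  have hpz : (1 : ℤ) ≤ (p : ℤ) := by exact_mod_cast hp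
  have hkz : (2 : ℤ) ≤ (k : ℤ) := by exact_mod_cast hk
  nlinarith

/-- In the line graph of a `k`-uniform hypergraph with multiplicity at most `p`,
two distinct maximal cliques of size at least `p·k² + (p−2)·k + 2` intersect in at
most `p` vertices. -/
theorem big_maximal_cliques_intersection {X : Type*} [DecidableEq X] (k p : ℕ)
    (hk : 2 ≤ k) (hp : 1 ≤ p)
    (H : Finset (Finset X)) (huniform : ∀ e ∈ H, e.card = k)
    (hpair : ∀ x y : X, x ≠ y → (H.filter (fun e => x ∈ e ∧ y ∈ e)).card ≤ p)
    (K₁ K₂ : Finset (Finset X)) (hK₁H : K₁ ⊆ H) (hK₂H : K₂ ⊆ H)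
    (hclique₁ : ∀ e ∈ K₁, ∀ f ∈ K₁, e ≠ f → (e ∩ f).Nonempty)
    (hclique₂ : ∀ e ∈ K₂, ∀ f ∈ K₂, e ≠ f → (e ∩ f).Nonempty)
    (hmax₁ : ∀ K' : Finset (Finset X), K' ⊆ H →
      (∀ e ∈ K', ∀ f ∈ K', e ≠ f → (e ∩ f).Nonempty) → K₁ ⊆ K' → K₁ = K')
    (hmax₂ : ∀ K' : Finset (Finset X), K' ⊆ H →
      (∀ e ∈ K', ∀ f ∈ K', e ≠ f → (e ∩ f).Nonempty) → K₂ ⊆ K' → K₂ = K')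
    (hcard₁ : (p : ℤ) * k ^ 2 + ((p : ℤ) - 2) * k + 2 ≤ (K₁.card : ℤ))
    (hcard₂ : (p : ℤ) * k ^ 2 + ((p : ℤ) - 2) * k + 2 ≤ (K₂.card : ℤ))
    (hne : K₁ ≠ K₂) :
    (K₁ ∩ K₂).card ≤ p := by
  obtain ⟨x₁, hx₁⟩ := big_clique_common_vertex k p hk hp H huniform hpair K₁ hK₁H hclique₁ hcard₁
  obtain ⟨x₂, hx₂⟩ := big_clique_common_vertex k p hk hp H huniform hpair K₂ hK₂H hclique₂ hcard₂
  have hstar_clique : ∀ x : X, ∀ e ∈ H.filter (fun e => x ∈ e), ∀ f ∈ H.filter (fun e => x ∈ e),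
      e ≠ f → (e ∩ f).Nonempty := by
    intro x e he f hf _
    simp only [Finset.mem_filter] at he hf
    exact ⟨x, Finset.mem_inter.mpr ⟨he.2, hf.2⟩⟩
  have hK₁eq : K₁ = H.filter (fun e => x₁ ∈ e) :=
    hmax₁ _ (Finset.filter_subset _ _) (hstar_clique x₁)
      (fun e he => Finset.mem_filter.mpr ⟨hK₁H he, hx₁ e he⟩)
  have hK₂eq : K₂ = H.filter (fun e => x₂ ∈ e) :=
    hmax₂ _ (Finset.filter_subset _ _) (hstar_clique x₂)
      (fun e he => Finset.mem_filter.mpr ⟨hK₂H he, hx₂ e he⟩)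
  have hxne : x₁ ≠ x₂ := by
    intro h
    exact hne (hK₁eq.trans (h ▸ hK₂eq.symm))
  have hsub : K₁ ∩ K₂ ⊆ H.filter (fun e => x₁ ∈ e ∧ x₂ ∈ e) := by
    intro e he
    simp only [Finset.mem_inter] at he
    exact Finset.mem_filter.mpr ⟨hK₁H he.1, hx₁ e he.1, hx₂ e he.2⟩
  exact le_trans (Finset.card_le_card hsub) (hpair x₁ x₂ hxne)
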